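/- arXiv:2107.09572 — 6 statements merged into one kernel-verified Lean document; each statement's English description precedes it below -/
import Mathlib

section
/- Let h : [0,1] → ℝ be twice differentiable and strictly convex with h'' > 0, let d ≥ 1, and suppose there exist constants c ∈ ℝ and λ > 0 such that for every y in a subset Y of the d-dimensional probability simplex one has ∑_{i=1}^d h(y_i) + 2∑_{i=1}^d (h'(y_i) − c)²/h''(y_i) + λ ≤ 0. Define H(x) = √(‖x‖₁) · ∑_{i=1}^d h(x_i/‖x‖₁) for x ∈ ℝ₊^d. Then at every x ∈ ℝ₊^d with x/‖x‖₁ ∈ Y, the Hessian satisfies ∇²H(x) ⪰ (λ/4)‖x‖₁^{−3/2} J + (1/2)‖x‖₁^{−7/2} ∑_{i=1}^d x_i² h''(x_i/‖x‖₁) z_i z_iᵀ, where J is the d×d all-ones matrix and z_i = 𝟏_d − (‖x‖₁/x_i) e_i. -/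
/-!
Along the line `y + t • v` the normalized point `p = y / ‖y‖₁` moves with velocity `w`, which is
tangent to the simplex (`∑ wᵢ = 0`) and itself changes at rate `-2 σ w / s`, where `s = ‖y‖₁`
and `σ = ∑ vᵢ`. Differentiating `H` twice along `v` therefore gives, with `r = √s`,
  `∂ᵥ² H = -σ² / (4 r³) ∑ h(pᵢ) - σ / r ∑ h'(pᵢ) wᵢ + r ∑ h''(pᵢ) wᵢ²`.
Since `∑ wᵢ = 0`, `h'` may be replaced by `h' - c`; completing the square in each `wᵢ` consumes
half of the curvature term and leaves `-σ² / (4 r³) (∑ h(pᵢ) + 2 ∑ (h'(pᵢ) - c)² / h''(pᵢ))`,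
which the hypothesis bounds below by `λ σ² / (4 r³)`.
-/

open Real Finset Filter Topology

section LineDerivCalculus

variable {𝕜 E : Type*} [NontriviallyNormedField 𝕜] [AddCommGroup E] [Module 𝕜 E]
  {f g : E → 𝕜} {f' g' : 𝕜} {x v : E}

theorem HasLineDerivAt.fun_mul (hf : HasLineDerivAt 𝕜 f f' x v) (hg : HasLineDerivAt 𝕜 g g' x v) :
    HasLineDerivAt 𝕜 (fun y => f y * g y) (f' * g x + f x * g') x v := by
  simpa only [HasLineDerivAt, zero_smul, add_zero] using HasDerivAt.fun_mul hf hg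

theorem HasLineDerivAt.fun_div (hf : HasLineDerivAt 𝕜 f f' x v) (hg : HasLineDerivAt 𝕜 g g' x v)
    (hx : g x ≠ 0) :
    HasLineDerivAt 𝕜 (fun y => f y / g y) ((f' * g x - f x * g') / g x ^ 2) x v := by
  have := HasDerivAt.fun_div hf hg (by simpa only [zero_smul, add_zero] using hx)
  simpa only [HasLineDerivAt, zero_smul, add_zero] using this

theorem HasDerivAt.comp_hasLineDerivAt {φ : 𝕜 → 𝕜} {φ' : 𝕜} (hf : HasLineDerivAt 𝕜 f f' x v)
    (hφ : HasDerivAt φ φ' (f x)) :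
    HasLineDerivAt 𝕜 (fun y => φ (f y)) (φ' * f') x v := by
  rw [← add_zero x, ← zero_smul 𝕜 v] at hφ
  exact hφ.comp 0 hf

theorem HasLineDerivAt.fun_sum {ι : Type*} {s : Finset ι} {f : ι → E → 𝕜} {f' : ι → 𝕜}
    (hf : ∀ i ∈ s, HasLineDerivAt 𝕜 (f i) (f' i) x v) :
    HasLineDerivAt 𝕜 (fun y => ∑ i ∈ s, f i y) (∑ i ∈ s, f' i) x v :=
  HasDerivAt.fun_sum hf

theorem HasLineDerivAt.fun_add (hf : HasLineDerivAt 𝕜 f f' x v) (hg : HasLineDerivAt 𝕜 g g' x v) :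
    HasLineDerivAt 𝕜 (fun y => f y + g y) (f' + g') x v :=
  HasDerivAt.fun_add hf hg

theorem HasLineDerivAt.fun_sub (hf : HasLineDerivAt 𝕜 f f' x v) (hg : HasLineDerivAt 𝕜 g g' x v) :
    HasLineDerivAt 𝕜 (fun y => f y - g y) (f' - g') x v :=
  HasDerivAt.fun_sub hf hg

theorem HasLineDerivAt.const_mul (c : 𝕜) (hf : HasLineDerivAt 𝕜 f f' x v) :
    HasLineDerivAt 𝕜 (fun y => c * f y) (c * f') x v :=
  HasDerivAt.const_mul c hf

theorem hasLineDerivAt_const (c : 𝕜) : HasLineDerivAt 𝕜 (fun _ : E => c) 0 x v :=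
  hasDerivAt_const 0 c

theorem HasLineDerivAt.fderiv_apply {V : Type*} [NormedAddCommGroup V] [NormedSpace 𝕜 V]
    {f : V → 𝕜} {f' : 𝕜} {x v : V}
    (hf : DifferentiableAt 𝕜 f x) (hf' : HasLineDerivAt 𝕜 f f' x v) : fderiv 𝕜 f x v = f' :=
  hf.lineDeriv_eq_fderiv.symm.trans hf'.lineDeriv

end LineDerivCalculus

theorem hasLineDerivAt_apply {ι 𝕜 : Type*} [NontriviallyNormedField 𝕜] [Fintype ι] (i : ι)
    (x v : ι → 𝕜) :
    HasLineDerivAt 𝕜 (fun y => y i) (v i) x v :=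
  (hasFDerivAt_apply (𝕜 := 𝕜) i x).hasLineDerivAt v

section TsallisPerspective

variable {ι : Type*} [Fintype ι]

noncomputable def tsallisPerspective (h : ℝ → ℝ) (y : ι → ℝ) : ℝ :=
  √(∑ i, y i) * ∑ i, h (y i / ∑ j, y j)

noncomputable def normalizeLineDeriv (y v : ι → ℝ) (i : ι) : ℝ :=
  (v i * ∑ j, y j - y i * ∑ j, v j) / (∑ j, y j) ^ 2

noncomputable def tsallisPerspectiveLineDeriv (h : ℝ → ℝ) (y v : ι → ℝ) : ℝ :=
  (∑ i, v i) / (2 * √(∑ i, y i)) * ∑ i, h (y i / ∑ j, y j)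
    + √(∑ i, y i) * ∑ i, deriv h (y i / ∑ j, y j) * normalizeLineDeriv y v i

noncomputable def tsallisPerspectiveSecondLineDeriv (h : ℝ → ℝ) (y v : ι → ℝ) : ℝ :=
  -((∑ i, v i) ^ 2 / (4 * √(∑ i, y i) ^ 3)) * ∑ i, h (y i / ∑ j, y j)
    - (∑ i, v i) / √(∑ i, y i) * ∑ i, deriv h (y i / ∑ j, y j) * normalizeLineDeriv y v i
    + √(∑ i, y i) * ∑ i, deriv (deriv h) (y i / ∑ j, y j) * normalizeLineDeriv y v i ^ 2

theorem sum_normalizeLineDeriv (y v : ι → ℝ) : ∑ i, normalizeLineDeriv y v i = 0 := by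
  simp only [normalizeLineDeriv, ← sum_div, sum_sub_distrib, ← sum_mul, mul_comm, sub_self,
    zero_div]

theorem div_sum_mem_Icc {y : ι → ℝ} (hy : ∀ i, 0 ≤ y i) (i : ι) :
    y i / ∑ j, y j ∈ Set.Icc (0 : ℝ) 1 :=
  ⟨div_nonneg (hy i) (sum_nonneg fun j _ => hy j),
    div_le_one_of_le₀ (single_le_sum (fun j _ => hy j) (mem_univ i)) (sum_nonneg fun j _ => hy j)⟩

variable (y v : ι → ℝ)

theorem hasLineDerivAt_sum_apply : HasLineDerivAt ℝ (fun z : ι → ℝ => ∑ i, z i) (∑ i, v i) y v :=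
  HasLineDerivAt.fun_sum fun i _ => hasLineDerivAt_apply i y v

theorem hasLineDerivAt_sqrt_sum (hs : ∑ i, y i ≠ 0) :
    HasLineDerivAt ℝ (fun z : ι → ℝ => √(∑ i, z i)) ((∑ i, v i) / (2 * √(∑ i, y i))) y v := by
  simpa only [one_div, div_eq_inv_mul, mul_one] using
    HasDerivAt.comp_hasLineDerivAt (hasLineDerivAt_sum_apply y v) (Real.hasDerivAt_sqrt hs)

theorem hasLineDerivAt_div_sum (hs : ∑ i, y i ≠ 0) (i : ι) :
    HasLineDerivAt ℝ (fun z : ι → ℝ => z i / ∑ j, z j) (normalizeLineDeriv y v i) y v :=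
  (hasLineDerivAt_apply i y v).fun_div (hasLineDerivAt_sum_apply y v) hs

theorem hasLineDerivAt_sum_comp_div_sum {g : ℝ → ℝ} (hs : ∑ i, y i ≠ 0)
    (hg : ∀ i, DifferentiableAt ℝ g (y i / ∑ j, y j)) :
    HasLineDerivAt ℝ (fun z : ι → ℝ => ∑ i, g (z i / ∑ j, z j))
      (∑ i, deriv g (y i / ∑ j, y j) * normalizeLineDeriv y v i) y v :=
  HasLineDerivAt.fun_sum fun i _ =>
    HasDerivAt.comp_hasLineDerivAt (hasLineDerivAt_div_sum y v hs i) (hg i).hasDerivAt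

theorem hasLineDerivAt_normalizeLineDeriv (hs : ∑ i, y i ≠ 0) (i : ι) :
    HasLineDerivAt ℝ (fun z => normalizeLineDeriv z v i)
      (-(2 * ∑ j, v j) / (∑ j, y j) * normalizeLineDeriv y v i) y v := by
  have hnum := ((hasLineDerivAt_sum_apply y v).const_mul (v i)).fun_sub
    ((hasLineDerivAt_apply i y v).fun_mul (hasLineDerivAt_const (∑ j, v j)))
  have hden := HasDerivAt.comp_hasLineDerivAt (hasLineDerivAt_sum_apply y v) (hasDerivAt_pow 2 _)
  refine HasDerivAt.congr_deriv (hnum.fun_div hden (pow_ne_zero 2 hs)) ?_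
  unfold normalizeLineDeriv
  field_simp
  ring

variable {h : ℝ → ℝ}

theorem hasLineDerivAt_tsallisPerspective (hs : ∑ i, y i ≠ 0)
    (hh : ∀ i, DifferentiableAt ℝ h (y i / ∑ j, y j)) :
    HasLineDerivAt ℝ (tsallisPerspective h) (tsallisPerspectiveLineDeriv h y v) y v :=
  (hasLineDerivAt_sqrt_sum y v hs).fun_mul (hasLineDerivAt_sum_comp_div_sum y v hs hh)

theorem hasLineDerivAt_tsallisPerspectiveLineDeriv (hs : 0 < ∑ i, y i)
    (hh : ∀ i, DifferentiableAt ℝ h (y i / ∑ j, y j))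
    (hh' : ∀ i, DifferentiableAt ℝ (deriv h) (y i / ∑ j, y j)) :
    HasLineDerivAt ℝ (fun z => tsallisPerspectiveLineDeriv h z v)
      (tsallisPerspectiveSecondLineDeriv h y v) y v := by
  have hsqrt : √(∑ i, y i) ≠ 0 := (sqrt_pos.2 hs).ne'
  have hA := (hasLineDerivAt_const (∑ i, v i)).fun_div
    ((hasLineDerivAt_sqrt_sum y v hs.ne').const_mul 2) (mul_ne_zero two_ne_zero hsqrt)
  have hΦ := hasLineDerivAt_sum_comp_div_sum y v hs.ne' hh
  have hΨ := HasLineDerivAt.fun_sum (s := univ) fun i _ =>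
    (HasDerivAt.comp_hasLineDerivAt (hasLineDerivAt_div_sum y v hs.ne' i) (hh' i).hasDerivAt).fun_mul
      (hasLineDerivAt_normalizeLineDeriv y v hs.ne' i)
  refine HasDerivAt.congr_deriv
    ((hA.fun_mul hΦ).fun_add ((hasLineDerivAt_sqrt_sum y v hs.ne').fun_mul hΨ)) ?_
  have hregroup (a b w : ℝ) : b * w * w + a * (-(2 * ∑ j, v j) / (∑ j, y j) * w) =
      b * w ^ 2 + -(2 * ∑ j, v j) / (∑ j, y j) * (a * w) := by ring
  simp only [tsallisPerspectiveSecondLineDeriv, hregroup, sum_add_distrib, ← mul_sum]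
  have hs2 : √(∑ i, y i) ^ 2 = ∑ i, y i := sq_sqrt hs.le
  generalize ∑ i, h (y i / ∑ j, y j) = Φ
  generalize ∑ i, deriv h (y i / ∑ j, y j) * normalizeLineDeriv y v i = P
  generalize ∑ i, deriv (deriv h) (y i / ∑ j, y j) * normalizeLineDeriv y v i ^ 2 = Q
  generalize √(∑ i, y i) = r at hs2 hsqrt ⊢
  rw [← hs2]
  field_simp
  ring

theorem fderiv_tsallisPerspective_apply (hs : 0 < ∑ i, y i)
    (hh : ∀ i, DifferentiableAt ℝ h (y i / ∑ j, y j)) :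
    fderiv ℝ (tsallisPerspective h) y v = tsallisPerspectiveLineDeriv h y v := by
  refine HasLineDerivAt.fderiv_apply ?_ (hasLineDerivAt_tsallisPerspective y v hs.ne' hh)
  unfold tsallisPerspective
  fun_prop (disch := exact hs.ne')

theorem fderiv_tsallisPerspectiveLineDeriv_apply (hs : 0 < ∑ i, y i)
    (hh : ∀ i, DifferentiableAt ℝ h (y i / ∑ j, y j))
    (hh' : ∀ i, DifferentiableAt ℝ (deriv h) (y i / ∑ j, y j)) :
    fderiv ℝ (fun z => tsallisPerspectiveLineDeriv h z v) y v =
      tsallisPerspectiveSecondLineDeriv h y v := by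
  refine HasLineDerivAt.fderiv_apply ?_ (hasLineDerivAt_tsallisPerspectiveLineDeriv y v hs hh hh')
  unfold tsallisPerspectiveLineDeriv normalizeLineDeriv
  fun_prop (disch := simp [hs.ne', (sqrt_pos.2 hs).ne'])

theorem fderiv_fderiv_tsallisPerspective_apply [Nonempty ι]
    (hdiff : ∀ t ∈ Set.Icc (0 : ℝ) 1, DifferentiableAt ℝ h t ∧ DifferentiableAt ℝ (deriv h) t)
    (hy : ∀ i, 0 < y i) :
    fderiv ℝ (fun z => fderiv ℝ (tsallisPerspective h) z v) y v =
      tsallisPerspectiveSecondLineDeriv h y v := by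
  have hdiff_at {z : ι → ℝ} (hz : ∀ i, 0 < z i) (i : ι) :=
    hdiff _ (div_sum_mem_Icc (fun j => (hz j).le) i)
  have hfirst : (fun z => fderiv ℝ (tsallisPerspective h) z v)
      =ᶠ[𝓝 y] fun z => tsallisPerspectiveLineDeriv h z v := by
    filter_upwards [eventually_all.2 fun i => (continuous_apply i).continuousAt.eventually
      (lt_mem_nhds (hy i))] with z hz
    exact fderiv_tsallisPerspective_apply z v (sum_pos (fun i _ => hz i) univ_nonempty)
      fun i => (hdiff_at hz i).1
  rw [hfirst.fderiv_eq]
  exact fderiv_tsallisPerspectiveLineDeriv_apply y v (sum_pos (fun i _ => hy i) univ_nonempty)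
    (fun i => (hdiff_at hy i).1) fun i => (hdiff_at hy i).2

-- With the paper's `zᵢ = 𝟏 - (‖y‖₁ / yᵢ) eᵢ`: `yᵢ ⟪zᵢ, v⟫ = -‖y‖₁² * normalizeLineDeriv y v i`.
theorem sq_mul_sq_sub_div_mul_eq (hs : ∑ j, y j ≠ 0) {i : ι} (hy : y i ≠ 0) :
    y i ^ 2 * (∑ j, v j - (∑ j, y j) / y i * v i) ^ 2 =
      (∑ j, y j) ^ 4 * normalizeLineDeriv y v i ^ 2 := by
  unfold normalizeLineDeriv
  field_simp
  ring

theorem rpow_mul_sum_eq_sqrt_mul_sum_normalizeLineDeriv (b : ι → ℝ) (hs : 0 < ∑ i, y i)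
    (hy : ∀ i, y i ≠ 0) :
    (∑ i, y i) ^ (-(7 : ℝ) / 2) * ∑ i, y i ^ 2 * b i * (∑ j, v j - (∑ j, y j) / y i * v i) ^ 2 =
      √(∑ i, y i) * ∑ i, b i * normalizeLineDeriv y v i ^ 2 := by
  have hsum : ∑ i, y i ^ 2 * b i * (∑ j, v j - (∑ j, y j) / y i * v i) ^ 2 =
      √(∑ i, y i) ^ 8 * ∑ i, b i * normalizeLineDeriv y v i ^ 2 := by
    rw [show 8 = 2 * 4 by rfl, pow_mul, sq_sqrt hs.le, mul_sum]
    refine sum_congr rfl fun i _ => ?_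
    rw [mul_right_comm, sq_mul_sq_sub_div_mul_eq y v hs.ne' (hy i)]
    ring
  have hsqrt := (sqrt_pos.2 hs).ne'
  rw [hsum, rpow_div_two_eq_sqrt _ hs.le, rpow_neg (sqrt_nonneg _), rpow_ofNat]
  field_simp

end TsallisPerspective

/-- Shift `a` by `c` (allowed as `∑ wᵢ = 0`) and complete the square in each `wᵢ`. -/
theorem quadratic_form_lower_bound {ι : Type*} [Fintype ι] {a B w : ι → ℝ} {r σ c lam Φ : ℝ}
    (hr : 0 < r) (hB : ∀ i, 0 < B i) (hw : ∑ i, w i = 0)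
    (hcond : Φ + 2 * ∑ i, (a i - c) ^ 2 / B i + lam ≤ 0) :
    lam / 4 * (r ^ 3)⁻¹ * σ ^ 2 + 1 / 2 * r * ∑ i, B i * w i ^ 2 ≤
      -(σ ^ 2 / (4 * r ^ 3)) * Φ - σ / r * ∑ i, a i * w i + r * ∑ i, B i * w i ^ 2 := by
  have hshift : ∑ i, a i * w i = ∑ i, (a i - c) * w i := by
    simp only [sub_mul, sum_sub_distrib, ← mul_sum, hw, mul_zero, sub_zero]
  have hyoung (i : ι) : σ / r * ((a i - c) * w i) ≤
      r / 2 * (B i * w i ^ 2) + σ ^ 2 / (2 * r ^ 3) * ((a i - c) ^ 2 / B i) := by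
    have hsq : 0 ≤ (r * B i * w i - σ * (a i - c) / r) ^ 2 / (2 * r * B i) := by
      have := hB i; positivity
    have hB0 := (hB i).ne'
    have : (r * B i * w i - σ * (a i - c) / r) ^ 2 / (2 * r * B i) =
        r / 2 * (B i * w i ^ 2) + σ ^ 2 / (2 * r ^ 3) * ((a i - c) ^ 2 / B i)
          - σ / r * ((a i - c) * w i) := by
      field_simp; ring
    linarith
  have hsum := sum_le_sum fun i (_ : i ∈ univ) => hyoung i
  rw [← mul_sum, sum_add_distrib, ← mul_sum, ← mul_sum] at hsum
  have hscaled := mul_nonpos_of_nonneg_of_nonpos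
    (by positivity : 0 ≤ σ ^ 2 / (4 * r ^ 3)) hcond
  rw [show σ ^ 2 / (2 * r ^ 3) = 2 * (σ ^ 2 / (4 * r ^ 3)) by field_simp; ring] at hsum
  rw [hshift, show lam / 4 * (r ^ 3)⁻¹ * σ ^ 2 = σ ^ 2 / (4 * r ^ 3) * lam by field_simp]
  linarith

theorem tsallis_perspective_hessian_lower_bound_general
    {d : ℕ} (hd : 1 ≤ d) (h : ℝ → ℝ)
    (hdiff : ∀ y ∈ Set.Icc (0:ℝ) 1, DifferentiableAt ℝ h y ∧ DifferentiableAt ℝ (deriv h) y)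
    (hpos'' : ∀ y ∈ Set.Icc (0:ℝ) 1, 0 < deriv (deriv h) y)
    (Y : Set (Fin d → ℝ))
    (c lam : ℝ)
    (hcond : ∀ y ∈ Y,
      ∑ i, h (y i) + 2 * ∑ i, (deriv h (y i) - c) ^ 2 / deriv (deriv h) (y i) + lam ≤ 0)
    (H : (Fin d → ℝ) → ℝ)
    (hH : ∀ x : Fin d → ℝ,
      H x = Real.sqrt (∑ i, x i) * ∑ i, h (x i / ∑ j, x j))
    (x : Fin d → ℝ) (hx : ∀ i, 0 < x i)
    (hxY : (fun i => x i / ∑ j, x j) ∈ Y) :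
    ∀ v : Fin d → ℝ,
      lam / 4 * (∑ i, x i) ^ (-(3:ℝ)/2) * (∑ i, v i) ^ 2
        + 1 / 2 * (∑ i, x i) ^ (-(7:ℝ)/2) *
          ∑ i, (x i) ^ 2 * deriv (deriv h) (x i / ∑ j, x j) *
            ((∑ j, v j) - ((∑ j, x j) / x i) * v i) ^ 2
      ≤ fderiv ℝ (fun y => fderiv ℝ H y v) x v := by
  intro v
  have : Nonempty (Fin d) := ⟨⟨0, hd⟩⟩
  have hs : 0 < ∑ i, x i := sum_pos (fun i _ => hx i) univ_nonempty
  rw [show H = tsallisPerspective h from funext hH,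
    fderiv_fderiv_tsallisPerspective_apply x v hdiff hx, mul_assoc (1 / 2 : ℝ),
    rpow_mul_sum_eq_sqrt_mul_sum_normalizeLineDeriv x v _ hs fun i => (hx i).ne', ← mul_assoc,
    rpow_div_two_eq_sqrt _ hs.le, rpow_neg (sqrt_nonneg _), rpow_ofNat]
  exact quadratic_form_lower_bound (sqrt_pos.2 hs)
    (fun i => hpos'' _ (div_sum_mem_Icc (fun j => (hx j).le) i)) (sum_normalizeLineDeriv x v)
    (hcond _ hxY)

/-- Hessian lower bound for the Tsallis-perspective
`H(x) = √(‖x‖₁) ∑ᵢ h(xᵢ/‖x‖₁)` of a convex function `h`. -/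
theorem tsallis_perspective_hessian_lower_bound
    {d : ℕ} (hd : 1 ≤ d) (h : ℝ → ℝ)
    (hdiff : ∀ y ∈ Set.Icc (0:ℝ) 1, DifferentiableAt ℝ h y ∧ DifferentiableAt ℝ (deriv h) y)
    (hconv : StrictConvexOn ℝ (Set.Icc (0:ℝ) 1) h)
    (hpos'' : ∀ y ∈ Set.Icc (0:ℝ) 1, 0 < deriv (deriv h) y)
    (Y : Set (Fin d → ℝ))
    (hY : Y ⊆ {y : Fin d → ℝ | (∀ i, 0 ≤ y i) ∧ ∑ i, y i = 1})
    (c lam : ℝ) (hlam : 0 < lam)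
    (hcond : ∀ y ∈ Y,
      ∑ i, h (y i) + 2 * ∑ i, (deriv h (y i) - c) ^ 2 / deriv (deriv h) (y i) + lam ≤ 0)
    (H : (Fin d → ℝ) → ℝ)
    (hH : ∀ x : Fin d → ℝ,
      H x = Real.sqrt (∑ i, x i) * ∑ i, h (x i / ∑ j, x j))
    (x : Fin d → ℝ) (hx : ∀ i, 0 < x i)
    (hxY : (fun i => x i / ∑ j, x j) ∈ Y) :
    ∀ v : Fin d → ℝ,
      lam / 4 * (∑ i, x i) ^ (-(3:ℝ)/2) * (∑ i, v i) ^ 2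
        + 1 / 2 * (∑ i, x i) ^ (-(7:ℝ)/2) *
          ∑ i, (x i) ^ 2 * deriv (deriv h) (x i / ∑ j, x j) *
            ((∑ j, v j) - ((∑ j, x j) / x i) * v i) ^ 2
      ≤ fderiv ℝ (fun y => fderiv ℝ H y v) x v :=
  tsallis_perspective_hessian_lower_bound_general hd h hdiff hpos'' Y c lam hcond H hH x hx hxY
end

section
/- Fix 0 < γ ≤ e^{-1} and set α = 2(1 + log²(1/γ)), and define ψ(y) = y log y − α y on (0,1]. Then for every probability vector y ∈ ℝ^d with y_i ≥ γ for all i, it holds that ∑_{i=1}^d ψ(y_i) + 2 ∑_{i=1}^d (ψ'(y_i) − c)²/ψ''(y_i) + 2 ≤ 0, where c = −(1 + 2 log²(1/γ)). -/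
open Real Finset

/-- the shifted Shannon entropy term `ψ(y) = y log y − α y`
satisfies the key condition with constants `c = −(1 + 2 log²(1/γ))`, `λ = 2`. -/
theorem shifted_shannon_condition {d : ℕ} (γ : ℝ)
    (hγ0 : 0 < γ) (hγe : γ ≤ Real.exp (-1))
    (α : ℝ) (hα : α = 2 * (1 + (Real.log (1/γ)) ^ 2))
    (c : ℝ) (hc : c = -(1 + 2 * (Real.log (1/γ)) ^ 2))
    (y : Fin d → ℝ) (hnn : ∀ i, 0 ≤ y i) (hsum : ∑ i, y i = 1)
    (hlb : ∀ i, γ ≤ y i) :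
    ∑ i, (y i * Real.log (y i) - α * y i)
      + 2 * ∑ i, (Real.log (y i) + 1 - α - c) ^ 2 / (1 / y i)
      + 2 ≤ 0 := by
  set L : ℝ := Real.log (1/γ) with hL
  have hLγ : L = - Real.log γ := by rw [hL, one_div, Real.log_inv]
  have hypos : ∀ i, 0 < y i := fun i => lt_of_lt_of_le hγ0 (hlb i)
  have hy1 : ∀ i, y i ≤ 1 := by
    intro i
    calc y i ≤ ∑ j, y j :=
          Finset.single_le_sum (fun j _ => hnn j) (Finset.mem_univ i)
      _ = 1 := hsum
  have hlog0 : ∀ i, Real.log (y i) ≤ 0 := fun i => Real.log_nonpos (hnn i) (hy1 i)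
  have hlogL : ∀ i, (Real.log (y i))^2 ≤ L^2 := by
    intro i
    have h1 : -L ≤ Real.log (y i) := by
      rw [hLγ, neg_neg]
      exact Real.log_le_log hγ0 (hlb i)
    have h2 : Real.log (y i) ≤ L := by
      have : (0:ℝ) ≤ L := by
        rw [hLγ]; linarith [Real.log_nonpos hγ0.le (hγe.trans (by
          have := Real.exp_lt_one_iff.mpr (show (-1:ℝ) < 0 by norm_num)
          linarith))]
      linarith [hlog0 i]
    exact sq_le_sq' h1 h2
  -- simplify the second sum: log y + 1 - α - c = log y
  have hsimp : ∀ i, (Real.log (y i) + 1 - α - c) ^ 2 / (1 / y i)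
      = (Real.log (y i))^2 * y i := by
    intro i
    have : Real.log (y i) + 1 - α - c = Real.log (y i) := by
      rw [hα, hc]; ring
    rw [this]; field_simp
  rw [Finset.sum_congr rfl (fun i _ => hsimp i)]
  have h1 : ∑ i, (y i * Real.log (y i) - α * y i) ≤ -α := by
    have heq : ∑ i, (y i * Real.log (y i) - α * y i)
        = (∑ i, y i * Real.log (y i)) - α := by
      rw [Finset.sum_sub_distrib, ← Finset.mul_sum, hsum, mul_one]
    rw [heq]
    have : ∑ i, y i * Real.log (y i) ≤ 0 :=
      Finset.sum_nonpos fun i _ => mul_nonpos_of_nonneg_of_nonpos (hnn i) (hlog0 i)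
    linarith
  have h2 : ∑ i, (Real.log (y i))^2 * y i ≤ L^2 := by
    calc ∑ i, (Real.log (y i))^2 * y i ≤ ∑ i, L^2 * y i :=
          Finset.sum_le_sum fun i _ =>
            mul_le_mul_of_nonneg_right (hlogL i) (hnn i)
      _ = L^2 := by rw [← Finset.mul_sum, hsum, mul_one]
  have hαval : α = 2 * (1 + L^2) := hα
  linarith
end

section
/- There exists a point x in the strictly positive orthant of ℝ² at which the Hessian of the function H(x) = √(x₁+x₂) · (ψ₀(x₁/(x₁+x₂)) + ψ₀(x₂/(x₁+x₂))), where ψ₀(y) = y log y, has a strictly negative eigenvalue; in particular H is not convex on ℝ₊². -/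
/-!
On the positive orthant `H x = (∑ xᵢ log xᵢ - s log s) * s^(-1/2)` with `s = ∑ xᵢ`. Along the
vertical line through `(1, 8)` this is `c ↦ (c log c - (1 + c) log (1 + c)) * (1 + c)^(-1/2)`,
whose second derivative at `c = 8` is `(1 - 8 log 2 + 4 log 3) / 216`, negative because
`e < 2⁸ / 3⁴`.
-/

open Real Finset Filter Topology

theorem ContDiffAt.fderiv_fderiv_apply_eq_deriv_deriv {E F : Type*} [NormedAddCommGroup E]
    [NormedSpace ℝ E] [NormedAddCommGroup F] [NormedSpace ℝ F] {f : E → F} {x : E}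
    (hf : ContDiffAt ℝ 2 f x) (v : E) :
    fderiv ℝ (fun y => fderiv ℝ f y v) x v = deriv (deriv fun t : ℝ => f (x + t • v)) 0 := by
  have hD : DifferentiableAt ℝ (fun y => fderiv ℝ f y v) x :=
    ((hf.fderiv_right (m := 1) (by norm_num)).differentiableAt one_ne_zero).clm_apply
      (differentiableAt_const v)
  have hline : Tendsto (fun s : ℝ => x + s • v) (𝓝 0) (𝓝 x) :=
    (by fun_prop : Continuous fun s : ℝ => x + s • v).tendsto' 0 x (by simp)
  have hdiff : ∀ᶠ s : ℝ in 𝓝 0, DifferentiableAt ℝ f (x + s • v) :=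
    hline.eventually (hf.eventually (by simp)) |>.mono fun s hs =>
      hs.differentiableAt (by norm_num)
  have hslice : (fun s : ℝ => fderiv ℝ f (x + s • v) v) =ᶠ[𝓝 0]
      deriv fun t : ℝ => f (x + t • v) := by
    filter_upwards [hdiff] with s hs
    rw [← hs.lineDeriv_eq_fderiv, lineDeriv]
    conv_rhs => rw [← add_zero s, ← deriv_comp_const_add]
    simp only [add_smul, add_assoc]
  rw [← hD.lineDeriv_eq_fderiv, lineDeriv, hslice.deriv_eq]

theorem deriv_deriv_eq_of_hasDerivAt {f f' : ℝ → ℝ} {x f'' : ℝ}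
    (hf : ∀ᶠ y in 𝓝 x, HasDerivAt f (f' y) y) (hf' : HasDerivAt f' f'' x) :
    deriv (deriv f) x = f'' := by
  have hderiv : deriv f =ᶠ[𝓝 x] f' := hf.mono fun y hy => hy.deriv
  rw [hderiv.deriv_eq, hf'.deriv]

theorem hasDerivAt_const_add_rpow (a p : ℝ) {c : ℝ} (hc : 0 < a + c) :
    HasDerivAt (fun c => (a + c) ^ p) (p * (a + c) ^ (p - 1)) c := by
  simpa using ((hasDerivAt_id c).const_add a).rpow_const (p := p) (Or.inl hc.ne')

theorem hasDerivAt_mul_log_sub_mul_log_const_add (a : ℝ) {c : ℝ} (hc : 0 < c)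
    (hac : 0 < a + c) :
    HasDerivAt (fun c => c * log c - (a + c) * log (a + c)) (log c - log (a + c)) c :=
  ((hasDerivAt_mul_log hc.ne').sub
    ((hasDerivAt_mul_log hac.ne').comp_const_add a c)).congr_deriv (by ring)

theorem deriv_deriv_mul_log_sub_mul_log_mul_rpow {a b : ℝ} (ha : 0 < a) (hb : 0 < b) :
    deriv (deriv fun c =>
        (a * log a + c * log c - (a + c) * log (a + c)) * (a + c) ^ (-1/2 : ℝ)) b =
      (a + b) ^ (-1/2 : ℝ) * (b⁻¹ - (a + b)⁻¹ - (log b - log (a + b)) / (a + b)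
        + 3 * (a * log a + b * log b - (a + b) * log (a + b)) / (4 * (a + b) ^ 2)) := by
  have hab : 0 < a + b := by linarith
  have hN : ∀ c, 0 < c → HasDerivAt (fun c => a * log a + c * log c - (a + c) * log (a + c))
      (log c - log (a + c)) c := fun c hc => by
    simpa only [add_sub_assoc, zero_add] using
      (hasDerivAt_mul_log_sub_mul_log_const_add a hc (by linarith)).const_add (a * log a)
  have hN' : HasDerivAt (fun c => log c - log (a + c)) (b⁻¹ - (a + b)⁻¹) b :=
    (hasDerivAt_log hb.ne').sub ((hasDerivAt_log hab.ne').comp_const_add a b)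
  refine deriv_deriv_eq_of_hasDerivAt
    (f' := fun c => (log c - log (a + c)) * (a + c) ^ (-1/2 : ℝ)
      + (a * log a + c * log c - (a + c) * log (a + c)) * (-1/2 * (a + c) ^ (-1/2 - 1 : ℝ)))
    ?_ ?_
  · filter_upwards [Ioi_mem_nhds hb] with c hc
    exact (hN c hc).mul (hasDerivAt_const_add_rpow a _ (by linarith [hc.out]))
  · refine ((hN'.mul (hasDerivAt_const_add_rpow a _ hab)).add
      ((hN b hb).mul ((hasDerivAt_const_add_rpow a _ hab).const_mul (-1/2 : ℝ)))).congr_deriv ?_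
    rw [rpow_sub_one hab.ne', rpow_sub_one hab.ne', rpow_sub_one hab.ne']
    field_simp
    ring

noncomputable def tsallisShannon {ι : Type*} [Fintype ι] (x : ι → ℝ) : ℝ :=
  √(∑ i, x i) * ∑ i, (x i / ∑ j, x j) * log (x i / ∑ j, x j)

section

variable {ι : Type*} [Fintype ι] [Nonempty ι] {x : ι → ℝ}

theorem contDiffAt_tsallisShannon (hx : ∀ i, 0 < x i) {n : WithTop ℕ∞} :
    ContDiffAt ℝ n tsallisShannon x := by
  have hs : 0 < ∑ i, x i := sum_pos (fun i _ => hx i) univ_nonempty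
  unfold tsallisShannon
  fun_prop (disch := first | exact hs.ne' | exact (div_pos (hx _) hs).ne')

theorem tsallisShannon_eq (hx : ∀ i, 0 < x i) :
    tsallisShannon x =
      (∑ i, x i * log (x i) - (∑ i, x i) * log (∑ i, x i)) * (∑ i, x i) ^ (-1/2 : ℝ) := by
  set s := ∑ i, x i with hs_def
  have hs : 0 < s := sum_pos (fun i _ => hx i) univ_nonempty
  have hsum : ∑ i, x i / s * log (x i / s) = (∑ i, x i * log (x i) - s * log s) / s := by
    rw [eq_div_iff hs.ne', sum_mul, hs_def, sum_mul, ← sum_sub_distrib, ← hs_def]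
    refine sum_congr rfl fun i _ => ?_
    rw [log_div (hx i).ne' hs.ne']
    field_simp
  rw [tsallisShannon, ← hs_def, hsum, sqrt_eq_rpow, mul_div_assoc', mul_comm, mul_div_assoc,
    ← rpow_sub_one hs.ne']
  norm_num

end

theorem deriv_deriv_tsallisShannon_line {a b : ℝ} (ha : 0 < a) (hb : 0 < b) :
    deriv (deriv fun t : ℝ => tsallisShannon (![a, b] + t • ![0, 1])) 0 =
      deriv (deriv fun c =>
        (a * log a + c * log c - (a + c) * log (a + c)) * (a + c) ^ (-1/2 : ℝ)) b := by
  set h := fun c => (a * log a + c * log c - (a + c) * log (a + c)) * (a + c) ^ (-1/2 : ℝ)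
  have hline : (fun t : ℝ => tsallisShannon (![a, b] + t • ![0, 1])) =ᶠ[𝓝 0]
      fun t => h (b + t) := by
    filter_upwards [Ioi_mem_nhds (neg_lt_zero.2 hb)] with t ht
    have hbt : 0 < b + t := by linarith [ht.out]
    have hpos : ∀ i, 0 < (![a, b] + t • ![0, 1] : Fin 2 → ℝ) i := by
      intro i; fin_cases i <;> simp [ha, hbt]
    rw [tsallisShannon_eq hpos]
    simp [Fin.sum_univ_two, h]
  have hshift : (deriv fun t => h (b + t)) = fun t => deriv h (b + t) :=
    funext fun t => deriv_comp_const_add h b t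
  rw [hline.deriv.deriv_eq, hshift, deriv_comp_const_add (deriv h) b 0, add_zero]

theorem one_lt_eight_mul_log_two_sub_four_mul_log_three : 1 < 8 * log 2 - 4 * log 3 := by
  have h := (lt_log_iff_exp_lt (by norm_num : (0 : ℝ) < 2 ^ 8 / 3 ^ 4)).2
    (exp_one_lt_d9.trans (by norm_num))
  rw [log_div (by norm_num) (by norm_num), log_pow, log_pow] at h
  exact_mod_cast h

/-- the Tsallis-perspective of the unshifted Shannon entropy term
`ψ₀(y) = y log y` in dimension 2 has a Hessian with a strictly negative
eigenvalue somewhere on the positive orthant; in particular it is not convex. -/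
theorem unshifted_tsallis_shannon_not_convex :
    ∃ x : Fin 2 → ℝ, (∀ i, 0 < x i) ∧
      ∃ v : Fin 2 → ℝ,
        fderiv ℝ (fun y =>
          fderiv ℝ (fun x' : Fin 2 → ℝ =>
            Real.sqrt (∑ i, x' i) *
              ∑ i, (x' i / ∑ j, x' j) * Real.log (x' i / ∑ j, x' j)) y v) x v < 0 := by
  have hx : ∀ i, 0 < (![1, 8] : Fin 2 → ℝ) i := fun i => by fin_cases i <;> norm_num
  refine ⟨![1, 8], hx, ![0, 1], ?_⟩
  change fderiv ℝ (fun y => fderiv ℝ tsallisShannon y _) _ _ < 0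
  rw [(contDiffAt_tsallisShannon hx).fderiv_fderiv_apply_eq_deriv_deriv,
    deriv_deriv_tsallisShannon_line one_pos (by norm_num),
    deriv_deriv_mul_log_sub_mul_log_mul_rpow one_pos (by norm_num)]
  refine mul_neg_of_pos_of_neg (by positivity) ?_
  have hlog8 : log 8 = 3 * log 2 := by
    rw [show (8 : ℝ) = 2 ^ 3 by norm_num, log_pow]; norm_num
  have hlog9 : log 9 = 2 * log 3 := by
    rw [show (9 : ℝ) = 3 ^ 2 by norm_num, log_pow]; norm_num
  norm_num [hlog8, hlog9]
  linarith [one_lt_eight_mul_log_two_sub_four_mul_log_three]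
end

section
/- Let V₁,…,V_K be a partition of {1,…,N}, let 0 < γ ≤ 1, and let p ∈ ℝ₊^N satisfy p_i / p(V_k) ≥ γ whenever i ∈ V_k, where p(V_k) = ∑_{i∈V_k} p_i. Set α = 2(1 + log²(1/γ)) and define Ψ(p) = ∑_{k=1}^K √(p(V_k)) ∑_{i∈V_k} ψ_α(p_i/p(V_k)) with ψ_α(y) = y log y − α y. Then ∇²Ψ(p) ⪰ (1/2) diag(1/(p₁√(p(V(1)))), …, 1/(p_N √(p(V(N))))), where V(i) denotes the partition element containing i. -/
/-! On a block with mass `Q = ∑_{i ∈ s} p_i`, split a direction as `v = w + (V / Q) p` with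
`V = ∑ v_i` (so `∑ w_i = 0`) and put `ℓ_i = log (Q / p_i) ∈ [0, log (1/γ)]`. A direct computation
of the second variation of the block gives
`Q^{5/2} (D²Ψ_s(v, v) - ½ ∑ v_i² / (p_i √Q)) = ½ Q² W + Q V C + ¼ h V² + ¼ (α - 2) Q V²`
with `W = ∑ w_i² / p_i`, `C = ∑ w_i ℓ_i` and `h = ∑ p_i ℓ_i ≥ 0`. Cauchy–Schwarz gives
`C² ≤ W · log²(1/γ) · Q`, so by AM–GM the cross term is absorbed by the first and last terms
as soon as `α ≥ 2 (1 + log²(1/γ))`. Summing over the blocks gives the theorem. -/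

open Real Finset Filter Topology

variable {ι : Type*}

noncomputable def blockEntropy (s : Finset ι) (α : ℝ) (q : ι → ℝ) : ℝ :=
  (∑ i ∈ s, q i * log (q i)) / √(∑ i ∈ s, q i) - √(∑ i ∈ s, q i) * (log (∑ i ∈ s, q i) + α)

theorem blockEntropy_eq_sqrt_mul_sum (s : Finset ι) (α : ℝ) (q : ι → ℝ) :
    blockEntropy s α q = √(∑ i ∈ s, q i) * ∑ i ∈ s, ((q i / ∑ j ∈ s, q j) *
      log (q i / ∑ j ∈ s, q j) - α * (q i / ∑ j ∈ s, q j)) := by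
  rw [blockEntropy]
  set Q := ∑ i ∈ s, q i
  rcases le_or_gt Q 0 with hQ | hQ
  · simp [sqrt_eq_zero_of_nonpos hQ]
  have hterm : ∀ i ∈ s, (q i / Q) * log (q i / Q) - α * (q i / Q)
      = (q i * log (q i) - q i * (log Q + α)) / Q := by
    intro i _
    rcases eq_or_ne (q i) 0 with h0 | h0
    · simp [h0]
    · rw [log_div h0 hQ.ne']; ring
  have hsqrt : √Q ^ 2 = Q := sq_sqrt hQ.le
  have hsqrt0 : √Q ≠ 0 := (sqrt_pos.2 hQ).ne'
  rw [sum_congr rfl hterm, ← sum_div, sum_sub_distrib, ← sum_mul]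
  field_simp
  rw [hsqrt]
  ring

noncomputable def blockEntropyDeriv (s : Finset ι) (α : ℝ) (q v : ι → ℝ) : ℝ :=
  (∑ i ∈ s, log (q i) * v i) / √(∑ i ∈ s, q i)
    - ((∑ i ∈ s, q i * log (q i)) / (∑ i ∈ s, q i) + log (∑ i ∈ s, q i) + α)
      * (∑ i ∈ s, v i) / (2 * √(∑ i ∈ s, q i))

noncomputable def blockEntropyDeriv2 (s : Finset ι) (α : ℝ) (q v : ι → ℝ) : ℝ :=
  (∑ i ∈ s, v i ^ 2 / q i) / √(∑ i ∈ s, q i)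
    - (∑ i ∈ s, log (q i) * v i + ∑ i ∈ s, v i) * (∑ i ∈ s, v i)
      / ((∑ i ∈ s, q i) * √(∑ i ∈ s, q i))
    + (3 * (∑ i ∈ s, q i * log (q i)) / (∑ i ∈ s, q i) + log (∑ i ∈ s, q i) + α)
      * (∑ i ∈ s, v i) ^ 2 / (4 * (∑ i ∈ s, q i) * √(∑ i ∈ s, q i))

theorem hasFDerivAt_sum_comp_apply [Fintype ι] {s : Finset ι} {F : ι → ℝ → ℝ} {F' : ι → ℝ}
    {q : ι → ℝ} (h : ∀ i ∈ s, HasDerivAt (F i) (F' i) (q i)) :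
    HasFDerivAt (fun q : ι → ℝ => ∑ i ∈ s, F i (q i))
      (∑ i ∈ s, F' i • ContinuousLinearMap.proj (R := ℝ) (φ := fun _ : ι => ℝ) i) q :=
  HasFDerivAt.fun_sum fun i hi => (h i hi).comp_hasFDerivAt q (hasFDerivAt_apply i q)

theorem exists_hasFDerivAt_blockEntropy [Fintype ι] (s : Finset ι) (α : ℝ) {q : ι → ℝ}
    (hq : ∀ i ∈ s, 0 < q i) (v : ι → ℝ) :
    ∃ D : (ι → ℝ) →L[ℝ] ℝ, HasFDerivAt (blockEntropy s α) D q ∧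
      D v = blockEntropyDeriv s α q v := by
  rcases s.eq_empty_or_nonempty with rfl | hs
  · refine ⟨0, ?_, by simp [blockEntropyDeriv]⟩
    convert hasFDerivAt_const (0 : ℝ) q using 1
    funext q
    simp [blockEntropy]
  have hQ : 0 < ∑ i ∈ s, q i := sum_pos hq hs
  have hr : 0 < √(∑ i ∈ s, q i) := sqrt_pos.2 hQ
  have hmass := hasFDerivAt_sum_comp_apply (s := s) (q := q) (F := fun _ x => x)
    fun i _ => hasDerivAt_id' (q i)
  have hS := hasFDerivAt_sum_comp_apply (s := s) (q := q) (F := fun _ x => x * log x)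
    fun i hi => hasDerivAt_mul_log (hq i hi).ne'
  have hsqrt := hmass.sqrt hQ.ne'
  have hlog := hmass.log hQ.ne'
  have hinvr := (hasDerivAt_inv hr.ne').comp_hasFDerivAt q hsqrt
  refine ⟨_, (hS.mul hinvr).sub (hsqrt.mul (hlog.add_const α)) |>.congr_of_eventuallyEq ?_, ?_⟩
  · exact .of_forall fun q => by simp [blockEntropy, div_eq_mul_inv]
  · simp only [sub_apply, add_apply, smul_apply, FunLike.coe_sum, Finset.sum_apply,
      ContinuousLinearMap.proj_apply, smul_eq_mul, Function.comp_apply, add_mul, one_mul,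
      sum_add_distrib, blockEntropyDeriv]
    field_simp
    rw [sq_sqrt hQ.le]
    ring

theorem exists_hasFDerivAt_blockEntropyDeriv [Fintype ι] (s : Finset ι) (α : ℝ) {q : ι → ℝ}
    (hq : ∀ i ∈ s, 0 < q i) (v : ι → ℝ) :
    ∃ D : (ι → ℝ) →L[ℝ] ℝ, HasFDerivAt (fun q => blockEntropyDeriv s α q v) D q ∧
      D v = blockEntropyDeriv2 s α q v := by
  rcases s.eq_empty_or_nonempty with rfl | hs
  · refine ⟨0, ?_, by simp [blockEntropyDeriv2]⟩
    convert hasFDerivAt_const (0 : ℝ) q using 1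
    funext q
    simp [blockEntropyDeriv]
  have hQ : 0 < ∑ i ∈ s, q i := sum_pos hq hs
  have hr : 0 < √(∑ i ∈ s, q i) := sqrt_pos.2 hQ
  have hmass := hasFDerivAt_sum_comp_apply (s := s) (q := q) (F := fun _ x => x)
    fun i _ => hasDerivAt_id' (q i)
  have hS := hasFDerivAt_sum_comp_apply (s := s) (q := q) (F := fun _ x => x * log x)
    fun i hi => hasDerivAt_mul_log (hq i hi).ne'
  have hT := hasFDerivAt_sum_comp_apply (s := s) (q := q) (F := fun i x => log x * v i)
    fun i hi => (hasDerivAt_log (hq i hi).ne').mul_const (v i)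
  have hsqrt := hmass.sqrt hQ.ne'
  have hlog := hmass.log hQ.ne'
  have hinvQ := (hasDerivAt_inv hQ.ne').comp_hasFDerivAt q hmass
  have hinvr := (hasDerivAt_inv hr.ne').comp_hasFDerivAt q hsqrt
  refine ⟨_, (hT.mul hinvr).sub ((((hS.mul hinvQ).add hlog).add_const α).mul
    (hinvr.const_mul ((∑ i ∈ s, v i) / 2))) |>.congr_of_eventuallyEq ?_, ?_⟩
  · refine .of_forall fun q => ?_
    simp only [blockEntropyDeriv, Function.comp_apply, Pi.mul_apply, Pi.sub_apply, Pi.add_apply]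
    ring
  · simp only [sub_apply, add_apply, smul_apply, FunLike.coe_sum, Finset.sum_apply,
      ContinuousLinearMap.proj_apply, smul_eq_mul, Function.comp_apply, add_mul, one_mul,
      sum_add_distrib, Pi.mul_apply, Pi.add_apply, blockEntropyDeriv2]
    have hsq : ∀ i ∈ s, (q i)⁻¹ * v i * v i = v i ^ 2 / q i := fun i _ => by ring
    rw [sum_congr rfl hsq]
    field_simp
    rw [sq_sqrt hQ.le]
    ring

theorem log_sum_sub_log_mem_Icc {s : Finset ι} {p : ι → ℝ} {γ : ℝ} (hγ : 0 < γ)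
    (hp : ∀ i ∈ s, 0 < p i) {i : ι} (hi : i ∈ s) (hratio : γ ≤ p i / ∑ j ∈ s, p j) :
    log (∑ j ∈ s, p j) - log (p i) ∈ Set.Icc 0 (log (1 / γ)) := by
  have hQ : 0 < ∑ j ∈ s, p j := sum_pos hp ⟨i, hi⟩
  have hpi_le : p i ≤ ∑ j ∈ s, p j := single_le_sum (fun j hj => (hp j hj).le) hi
  have hγQ : γ * ∑ j ∈ s, p j ≤ p i := (le_div_iff₀ hQ).1 hratio
  have := log_le_log (mul_pos hγ hQ) hγQ
  rw [log_mul hγ.ne' hQ.ne'] at this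
  rw [one_div, log_inv]
  exact ⟨sub_nonneg.2 (log_le_log (hp i hi) hpi_le), by linarith⟩

theorem sq_sum_mul_le_sum_sq_div_mul_sum {s : Finset ι} {p w ℓ : ι → ℝ} {L : ℝ}
    (hp : ∀ i ∈ s, 0 < p i) (hℓ : ∀ i ∈ s, ℓ i ^ 2 ≤ L ^ 2) :
    (∑ i ∈ s, w i * ℓ i) ^ 2 ≤ (∑ i ∈ s, w i ^ 2 / p i) * (L ^ 2 * ∑ i ∈ s, p i) := by
  rw [mul_sum]
  refine sum_sq_le_sum_mul_sum_of_sq_le_mul s (fun i hi => div_nonneg (sq_nonneg _) (hp i hi).le)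
    (fun i hi => mul_nonneg (sq_nonneg L) (hp i hi).le) fun i hi => ?_
  have hpi := (hp i hi).ne'
  calc (w i * ℓ i) ^ 2 = w i ^ 2 * ℓ i ^ 2 := mul_pow _ _ _
    _ ≤ w i ^ 2 * L ^ 2 := mul_le_mul_of_nonneg_left (hℓ i hi) (sq_nonneg _)
    _ = w i ^ 2 / p i * (L ^ 2 * p i) := by field_simp

theorem neg_le_add_div_two_of_sq_le_mul {x a b : ℝ} (ha : 0 ≤ a) (hb : 0 ≤ b)
    (h : x ^ 2 ≤ a * b) : -x ≤ (a + b) / 2 := by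
  nlinarith [sq_nonneg (a - b), sq_nonneg (x + (a + b) / 2)]

theorem blockEntropyDeriv2_eq {s : Finset ι} {α : ℝ} {p v : ι → ℝ} {W C h : ℝ}
    (hQ : 0 < ∑ i ∈ s, p i)
    (hsq : ∑ i ∈ s, v i ^ 2 / p i = W + (∑ i ∈ s, v i) ^ 2 / ∑ i ∈ s, p i)
    (hT : ∑ i ∈ s, log (p i) * v i = (∑ i ∈ s, v i) * log (∑ i ∈ s, p i)
      - (C + (∑ i ∈ s, v i) / (∑ i ∈ s, p i) * h))
    (hS : ∑ i ∈ s, p i * log (p i) = (∑ i ∈ s, p i) * log (∑ i ∈ s, p i) - h) :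
    blockEntropyDeriv2 s α p v = 1 / 2 * (∑ i ∈ s, v i ^ 2 / p i) / √(∑ i ∈ s, p i)
      + ((∑ i ∈ s, p i) ^ 2 * W / 2 + (∑ i ∈ s, p i) * (∑ i ∈ s, v i) * C
        + h * (∑ i ∈ s, v i) ^ 2 / 4 + (α - 2) * (∑ i ∈ s, p i) * (∑ i ∈ s, v i) ^ 2 / 4)
        / ((∑ i ∈ s, p i) ^ 2 * √(∑ i ∈ s, p i)) := by
  have hr := (sqrt_pos.2 hQ).ne'
  rw [blockEntropyDeriv2, hsq, hT, hS]
  field_simp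
  ring

theorem half_sum_sq_div_le_blockEntropyDeriv2 {s : Finset ι} {p : ι → ℝ} {γ α : ℝ} (hγ : 0 < γ)
    (hp : ∀ i ∈ s, 0 < p i) (hratio : ∀ i ∈ s, γ ≤ p i / ∑ j ∈ s, p j)
    (hα : 2 * (1 + log (1 / γ) ^ 2) ≤ α) (v : ι → ℝ) :
    1 / 2 * ∑ i ∈ s, v i ^ 2 / (p i * √(∑ j ∈ s, p j)) ≤ blockEntropyDeriv2 s α p v := by
  rcases s.eq_empty_or_nonempty with rfl | hs
  · simp [blockEntropyDeriv2]
  set Q := ∑ i ∈ s, p i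
  set V := ∑ i ∈ s, v i
  set L := log (1 / γ)
  set ℓ := fun i => log Q - log (p i)
  set w := fun i => v i - V / Q * p i
  have hQ : 0 < Q := sum_pos hp hs
  have hℓ : ∀ i ∈ s, ℓ i ∈ Set.Icc 0 L := fun i hi => log_sum_sub_log_mem_Icc hγ hp hi (hratio i hi)
  have hsq : ∑ i ∈ s, v i ^ 2 / p i = ∑ i ∈ s, w i ^ 2 / p i + V ^ 2 / Q := by
    have hw : ∀ i ∈ s, w i ^ 2 / p i = v i ^ 2 / p i - 2 * (V / Q) * v i + (V / Q) ^ 2 * p i :=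
      fun i hi => by simp only [w]; field_simp [(hp i hi).ne']; ring
    rw [sum_congr rfl hw, sum_add_distrib, sum_sub_distrib, ← mul_sum, ← mul_sum]
    field_simp
    ring
  have hT : ∑ i ∈ s, log (p i) * v i
      = V * log Q - (∑ i ∈ s, w i * ℓ i + V / Q * ∑ i ∈ s, p i * ℓ i) := by
    have hv : ∀ i ∈ s, log (p i) * v i = v i * log Q - (w i * ℓ i + V / Q * (p i * ℓ i)) :=
      fun i _ => by simp only [w, ℓ]; ring
    rw [sum_congr rfl hv, sum_sub_distrib, sum_add_distrib, ← sum_mul, ← mul_sum]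
  have hS : ∑ i ∈ s, p i * log (p i) = Q * log Q - ∑ i ∈ s, p i * ℓ i := by
    have hp' : ∀ i ∈ s, p i * log (p i) = p i * log Q - p i * ℓ i :=
      fun i _ => by simp only [ℓ]; ring
    rw [sum_congr rfl hp', sum_sub_distrib, ← sum_mul]
  have hCS := sq_sum_mul_le_sum_sq_div_mul_sum (w := w) hp fun i hi =>
    pow_le_pow_left₀ (hℓ i hi).1 (hℓ i hi).2 2
  have hW : 0 ≤ ∑ i ∈ s, w i ^ 2 / p i :=
    sum_nonneg fun i hi => div_nonneg (sq_nonneg _) (hp i hi).le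
  have hh : 0 ≤ ∑ i ∈ s, p i * ℓ i := sum_nonneg fun i hi => mul_nonneg (hp i hi).le (hℓ i hi).1
  have hAMGM := neg_le_add_div_two_of_sq_le_mul (x := Q * V * ∑ i ∈ s, w i * ℓ i)
    (mul_nonneg (sq_nonneg Q) hW) (mul_nonneg (mul_nonneg (sq_nonneg L) hQ.le) (sq_nonneg V))
    (by nlinarith [mul_le_mul_of_nonneg_left hCS (mul_nonneg (sq_nonneg Q) (sq_nonneg V))])
  rw [blockEntropyDeriv2_eq hQ hsq hT hS]
  have hN : 0 ≤ Q ^ 2 * (∑ i ∈ s, w i ^ 2 / p i) / 2 + Q * V * (∑ i ∈ s, w i * ℓ i)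
      + (∑ i ∈ s, p i * ℓ i) * V ^ 2 / 4 + (α - 2) * Q * V ^ 2 / 4 := by
    nlinarith [mul_nonneg hh (sq_nonneg V),
      mul_nonneg (sub_nonneg.2 hα) (mul_nonneg hQ.le (sq_nonneg V))]
  rw [mul_div_assoc, sum_div]
  simp_rw [div_div]
  exact le_add_of_nonneg_right (div_nonneg hN (by positivity))

theorem fderiv_sum_apply_of_hasFDerivAt {κ E : Type*} [Fintype κ] [NormedAddCommGroup E]
    [NormedSpace ℝ E] {f : κ → E → ℝ} {g : κ → ℝ} {x v : E}
    (h : ∀ k, ∃ D : E →L[ℝ] ℝ, HasFDerivAt (f k) D x ∧ D v = g k) :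
    fderiv ℝ (fun x => ∑ k, f k x) x v = ∑ k, g k := by
  choose D hD hDv using h
  rw [(HasFDerivAt.fun_sum fun k _ => hD k).fderiv, _root_.sum_apply]
  exact sum_congr rfl fun k _ => hDv k

theorem sum_eq_sum_sum_of_mem_iff {κ M : Type*} [Fintype ι] [Fintype κ] [AddCommMonoid M]
    (V : κ → Finset ι) (idx : ι → κ) (hmem : ∀ i, i ∈ V (idx i))
    (hpart : ∀ i k, i ∈ V k → k = idx i) (f : ι → κ → M) :
    ∑ i, f i (idx i) = ∑ k, ∑ i ∈ V k, f i k := by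
  calc ∑ i, f i (idx i) = ∑ i, ∑ k ∈ {idx i}, f i k := by simp
    _ = ∑ k, ∑ i ∈ V k, f i k := sum_comm' fun i k => by
      simpa using ⟨fun h => h ▸ hmem i, hpart i k⟩

theorem tsallis_shannon_hessian_lower_bound_general
    {N K : ℕ} (V : Fin K → Finset (Fin N)) (idx : Fin N → Fin K)
    (hmem : ∀ i, i ∈ V (idx i))
    (hpart : ∀ i k, i ∈ V k → k = idx i)
    (γ : ℝ) (hγ0 : 0 < γ)
    (p : Fin N → ℝ) (hp : ∀ i, 0 < p i)
    (hratio : ∀ i, γ ≤ p i / ∑ j ∈ V (idx i), p j)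
    (α : ℝ) (hα : α = 2 * (1 + (Real.log (1/γ)) ^ 2))
    (Ψ : (Fin N → ℝ) → ℝ)
    (hΨ : ∀ q : Fin N → ℝ,
      Ψ q = ∑ k, Real.sqrt (∑ i ∈ V k, q i) *
        ∑ i ∈ V k, ((q i / ∑ j ∈ V k, q j) * Real.log (q i / ∑ j ∈ V k, q j)
          - α * (q i / ∑ j ∈ V k, q j))) :
    ∀ v : Fin N → ℝ,
      (1/2) * ∑ i, (v i) ^ 2 / (p i * Real.sqrt (∑ j ∈ V (idx i), p j))
        ≤ fderiv ℝ (fun q => fderiv ℝ Ψ q v) p v := by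
  intro v
  have hΨ_eq : Ψ = fun q => ∑ k, blockEntropy (V k) α q :=
    funext fun q => by simp only [hΨ, blockEntropy_eq_sqrt_mul_sum]
  subst hΨ_eq
  have hpos : ∀ᶠ q in 𝓝 p, ∀ i, 0 < q i :=
    eventually_all.2 fun i => (continuous_apply i).continuousAt.eventually (lt_mem_nhds (hp i))
  have hfirst : (fun q => fderiv ℝ (fun q => ∑ k, blockEntropy (V k) α q) q v)
      =ᶠ[𝓝 p] fun q => ∑ k, blockEntropyDeriv (V k) α q v :=
    hpos.mono fun q hq => fderiv_sum_apply_of_hasFDerivAt fun k =>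
      exists_hasFDerivAt_blockEntropy (V k) α (fun i _ => hq i) v
  rw [hfirst.fderiv_eq, fderiv_sum_apply_of_hasFDerivAt fun k =>
      exists_hasFDerivAt_blockEntropyDeriv (V k) α (fun i _ => hp i) v,
    sum_eq_sum_sum_of_mem_iff V idx hmem hpart
      (fun i k => v i ^ 2 / (p i * Real.sqrt (∑ j ∈ V k, p j))), mul_sum]
  refine sum_le_sum fun k _ => half_sum_sq_div_le_blockEntropyDeriv2 hγ0 (fun i _ => hp i)
    (fun i hi => ?_) hα.ge v
  rw [hpart i k hi]
  exact hratio i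

/-- Hessian lower bound for the Tsallis-Shannon entropy
with respect to a partition `V₁,…,V_K` of `{1,…,N}`. -/
theorem tsallis_shannon_hessian_lower_bound
    {N K : ℕ} (V : Fin K → Finset (Fin N)) (idx : Fin N → Fin K)
    (hmem : ∀ i, i ∈ V (idx i))
    (hpart : ∀ i k, i ∈ V k → k = idx i)
    (γ : ℝ) (hγ0 : 0 < γ) (hγ1 : γ ≤ 1)
    (p : Fin N → ℝ) (hp : ∀ i, 0 < p i)
    (hratio : ∀ i, γ ≤ p i / ∑ j ∈ V (idx i), p j)
    (α : ℝ) (hα : α = 2 * (1 + (Real.log (1/γ)) ^ 2))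
    (Ψ : (Fin N → ℝ) → ℝ)
    (hΨ : ∀ q : Fin N → ℝ,
      Ψ q = ∑ k, Real.sqrt (∑ i ∈ V k, q i) *
        ∑ i ∈ V k, ((q i / ∑ j ∈ V k, q j) * Real.log (q i / ∑ j ∈ V k, q j)
          - α * (q i / ∑ j ∈ V k, q j))) :
    ∀ v : Fin N → ℝ,
      (1/2) * ∑ i, (v i) ^ 2 / (p i * Real.sqrt (∑ j ∈ V (idx i), p j))
        ≤ fderiv ℝ (fun q => fderiv ℝ Ψ q v) p v :=
  tsallis_shannon_hessian_lower_bound_general V idx hmem hpart γ hγ0 p hp hratio α hα Ψ hΨ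
end

section
/- Let R, B, C ≥ 0 with B > 0 and suppose that for every z > 1 we have R ≤ z·B + (R + 2C)/z. Then R ≤ 4B + 4√(B·C). -/
open Real

/-- self-bounding argument:
if `R ≤ zB + (R+2C)/z` for all `z > 1`, then `R ≤ 4B + 4√(BC)`. -/
theorem self_bounding_regret (R B C : ℝ) (hR : 0 ≤ R) (hB : 0 < B) (hC : 0 ≤ C)
    (h : ∀ z : ℝ, 1 < z → R ≤ z * B + (R + 2 * C) / z) :
    R ≤ 4 * B + 4 * Real.sqrt (B * C) := by
  set t := Real.sqrt ((B + 2 * C) / B) with htdef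
  have htpos : 0 < t := Real.sqrt_pos.mpr (by positivity)
  have ht2 : t ^ 2 = (B + 2 * C) / B := Real.sq_sqrt (by positivity)
  have ht2' : t ^ 2 * B = B + 2 * C := by
    field_simp at ht2 ⊢; linarith [ht2]
  set s := Real.sqrt (B * C) with hsdef
  have hs0 : 0 ≤ s := Real.sqrt_nonneg _
  have hs2 : s ^ 2 = B * C := Real.sq_sqrt (by positivity)
  have hz : R ≤ (1 + t) * B + (R + 2 * C) / (1 + t) := h (1 + t) (by linarith)
  have h1t : 0 < 1 + t := by linarith
  have hRt : R * t ≤ (1 + t) ^ 2 * B + 2 * C := by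
    have := (div_le_iff₀ h1t).mp (by linarith [hz] : (R + 2 * C) / (1 + t) ≤ (R + 2*C) / (1+t))
    have hz' : (R - (1 + t) * B) * (1 + t) ≤ R + 2 * C := by
      rcases le_or_gt (R - (1 + t) * B) 0 with hle | hlt
      · nlinarith
      · have := (le_div_iff₀ h1t).mp (by linarith : R - (1 + t) * B ≤ (R + 2 * C) / (1 + t))
        linarith
    nlinarith
  -- R ≤ 2B + 2tB
  have hR2 : R ≤ 2 * B + 2 * t * B := by
    have key : R * t ≤ 2 * B * t + 2 * t ^ 2 * B := by nlinarith
    nlinarith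
  have htB : t * B ≤ B + 2 * s := by
    nlinarith [sq_nonneg (t * B - (B + 2 * s)), sq_nonneg s, mul_nonneg hB.le hs0]
  linarith
end

section
/- Let W ⊆ ℝ^N be convex, ψ, φ : W → ℝ convex and twice differentiable with ψ strictly convex, let η₁ ≥ η₂ ≥ … ≥ η_T > 0 and H_t = η_t^{-1} ψ + φ. Given loss vectors g₁,…,g_T ∈ ℝ^N, let w_t = argmin_{w∈W} {w·∑_{s<t} g_s + H_t(w)} and w_t⁺ = argmin_{w∈W} {w·∑_{s≤t} g_s + H_t(w)}, and set F_t(w) = w·∑_{s<t} g_s + H_t(w), F_t⁺(w) = w·∑_{s≤t} g_s + H_t(w), and 1/η₀ := 0. Then for every w⋆ ∈ W, ∑_{t=1}^T (F_t⁺(w_t⁺) − F_t(w_t) − w⋆·g_t) ≤ φ(w⋆) − φ(w₁) + ∑_{t=1}^T (1/η_t − 1/η_{t−1})(ψ(w⋆) − ψ(w_t)). -/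
open Real Finset

lemma tele_sum (a : ℕ → ℝ) (T : ℕ) (hT : 1 ≤ T) :
    ∑ t ∈ Finset.Icc 1 T, (a t - if t = 1 then 0 else a (t - 1)) = a T := by
  induction T, hT using Nat.le_induction with
  | base => simp
  | succ n hn ih =>
    rw [Finset.sum_Icc_succ_top (by omega), ih]
    have h1 : n + 1 ≠ 1 := by omega
    simp [h1, show n ≠ 0 by omega]

/-- telescoping penalty bound in the refined FTRL regret analysis. -/
theorem ftrl_penalty_bound {N : ℕ} (W : Set (Fin N → ℝ)) (hW : Convex ℝ W)
    (ψ φ : (Fin N → ℝ) → ℝ)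
    (hψconv : ConvexOn ℝ W ψ) (hψstrict : StrictConvexOn ℝ W ψ)
    (hφconv : ConvexOn ℝ W φ)
    (hψsmooth : ContDiff ℝ 2 ψ) (hφsmooth : ContDiff ℝ 2 φ)
    (T : ℕ) (hT : 1 ≤ T)
    (η : ℕ → ℝ) (hηpos : ∀ t ∈ Finset.Icc 1 T, 0 < η t)
    (hηmono : ∀ s ∈ Finset.Icc 1 T, ∀ t ∈ Finset.Icc 1 T, s ≤ t → η t ≤ η s)
    (g : ℕ → Fin N → ℝ)
    (F Fplus : ℕ → (Fin N → ℝ) → ℝ)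
    (hF : ∀ t u, F t u
      = (∑ s ∈ Finset.Icc 1 (t - 1), ∑ i, u i * g s i) + (η t)⁻¹ * ψ u + φ u)
    (hFplus : ∀ t u, Fplus t u
      = (∑ s ∈ Finset.Icc 1 t, ∑ i, u i * g s i) + (η t)⁻¹ * ψ u + φ u)
    (w wplus : ℕ → Fin N → ℝ)
    (hw : ∀ t ∈ Finset.Icc 1 T, w t ∈ W ∧ ∀ u ∈ W, F t (w t) ≤ F t u)
    (hwplus : ∀ t ∈ Finset.Icc 1 T, wplus t ∈ W ∧ ∀ u ∈ W, Fplus t (wplus t) ≤ Fplus t u)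
    (wstar : Fin N → ℝ) (hwstar : wstar ∈ W) :
    ∑ t ∈ Finset.Icc 1 T, (Fplus t (wplus t) - F t (w t) - ∑ i, wstar i * g t i)
      ≤ φ wstar - φ (w 1)
        + ∑ t ∈ Finset.Icc 1 T,
            ((η t)⁻¹ - (if t = 1 then 0 else (η (t - 1))⁻¹)) * (ψ wstar - ψ (w t)) := by
  clear hW hψconv hψstrict hφconv hψsmooth hφsmooth hηpos hηmono
  revert hw hwplus wstar hwstar
  induction T, hT using Nat.le_induction with
  | base =>
    intro hw hwplus wstar hwstar
    have h1 := (hwplus 1 (by simp)).2 wstar hwstar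
    rw [hFplus 1 wstar] at h1
    have h2 : F 1 (w 1) = (η 1)⁻¹ * ψ (w 1) + φ (w 1) := by
      rw [hF 1 (w 1)]; simp
    simp only [Finset.Icc_self, Finset.sum_singleton, if_pos rfl, h2, ite_true,
      sub_zero, mul_sub] at *
    linarith [h1]
  | succ n hn ih =>
    intro hw hwplus wstar hwstar
    have hmem : ∀ t ∈ Finset.Icc 1 n, t ∈ Finset.Icc 1 (n + 1) := by
      intro t ht; simp at ht ⊢; omega
    have hw' := fun t ht => hw t (hmem t ht)
    have hwplus' := fun t ht => hwplus t (hmem t ht)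
    have hu : w (n + 1) ∈ W := (hw (n + 1) (by simp)).1
    have IH := ih hw' hwplus' (w (n + 1)) hu
    -- key optimality at step n+1
    have h1 := (hwplus (n + 1) (by simp)).2 wstar hwstar
    rw [hFplus (n + 1) wstar] at h1
    -- F (n+1) (w (n+1))
    have e2 : F (n + 1) (w (n + 1))
        = (∑ s ∈ Finset.Icc 1 n, ∑ i, w (n + 1) i * g s i)
          + (η (n + 1))⁻¹ * ψ (w (n + 1)) + φ (w (n + 1)) := by
      rw [hF]; norm_num
    -- telescope
    have tele : ∑ t ∈ Finset.Icc 1 n,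
        ((η t)⁻¹ - if t = 1 then 0 else (η (t - 1))⁻¹) = (η n)⁻¹ :=
      tele_sum (fun t => (η t)⁻¹) n hn
    have hne : n + 1 ≠ 1 := by omega
    -- split sums at n+1
    rw [Finset.sum_Icc_succ_top (show 1 ≤ n + 1 by omega),
        Finset.sum_Icc_succ_top (show 1 ≤ n + 1 by omega)] at *
    simp only [if_neg hne, Nat.add_sub_cancel] at *
    -- expand products of sums
    have exp1 : ∑ t ∈ Finset.Icc 1 n,
        ((η t)⁻¹ - if t = 1 then 0 else (η (t - 1))⁻¹) * (ψ (w (n+1)) - ψ (w t))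
        = (η n)⁻¹ * ψ (w (n+1)) - ∑ t ∈ Finset.Icc 1 n,
            ((η t)⁻¹ - if t = 1 then 0 else (η (t - 1))⁻¹) * ψ (w t) := by
      rw [← tele, Finset.sum_mul]
      rw [← Finset.sum_sub_distrib]
      exact Finset.sum_congr rfl (fun t _ => by ring)
    have exp2 : ∑ t ∈ Finset.Icc 1 n,
        ((η t)⁻¹ - if t = 1 then 0 else (η (t - 1))⁻¹) * (ψ wstar - ψ (w t))
        = (η n)⁻¹ * ψ wstar - ∑ t ∈ Finset.Icc 1 n,
            ((η t)⁻¹ - if t = 1 then 0 else (η (t - 1))⁻¹) * ψ (w t) := by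
      rw [← tele, Finset.sum_mul]
      rw [← Finset.sum_sub_distrib]
      exact Finset.sum_congr rfl (fun t _ => by ring)
    rw [exp1] at IH
    rw [exp2]
    -- separate the g-sums in the big sums
    have sep : ∀ v : Fin N → ℝ,
        ∑ t ∈ Finset.Icc 1 n, (Fplus t (wplus t) - F t (w t) - ∑ i, v i * g t i)
        = (∑ t ∈ Finset.Icc 1 n, (Fplus t (wplus t) - F t (w t)))
          - ∑ t ∈ Finset.Icc 1 n, ∑ i, v i * g t i := by
      intro v; rw [← Finset.sum_sub_distrib]
    rw [sep wstar]
    rw [sep (w (n+1))] at IH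
    linarith [h1, IH, e2]
end
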